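/- arXiv:2410.01779 — 5 statements merged into one kernel-verified Lean document; each statement's English description precedes it below -/
import Mathlib

section
/- Every sum potential r(z) = Σ_j Π_{(p,k)∈ idx(r)} z_{pkj} on the weight semi-ring Z is a semi-ring homomorphism to ℂ: r(1) = 1, r(z₁ + z₂) = r(z₁) + r(z₂), and r(z₁ * z₂) = r(z₁)·r(z₂). -/
/-- A column (hidden node) of a 2-layer network weight. -/
abbrev NNCol (d : ℕ) := Fin 3 → ZMod d → ℂ

/-- The weight space `Z = ⋃_q Z_q`: multisets of columns. -/
abbrev NNWeight (d : ℕ) := Multiset (NNCol d)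

/-- Ring addition: concatenation of hidden nodes. -/
def nnAdd {d : ℕ} (z₁ z₂ : NNWeight d) : NNWeight d := z₁ + z₂

/-- Ring multiplication: column-wise Kronecker (Khatri–Rao) product. -/
def nnMul {d : ℕ} (z₁ z₂ : NNWeight d) : NNWeight d :=
  z₁.bind fun c₁ => z₂.map fun c₂ => fun p k => c₁ p k * c₂ p k

/-- Multiplicative identity: the order-1 all-ones weight. -/
def nnOne (d : ℕ) : NNWeight d := {fun _ _ => 1}

/-- The sum potential associated to a finite multiset `idx` of index pairs
`(p,k)`: `r(z) = Σ_j Π_{(p,k) ∈ idx} z_{pkj}`. -/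
noncomputable def sumPot {d : ℕ} (idx : Multiset (Fin 3 × ZMod d)) (z : NNWeight d) : ℂ :=
  (z.map fun c => (idx.map fun pk => c pk.1 pk.2).prod).sum

theorem Multiset.sum_map_bind_map_of_map_mul {α R : Type*} [CommSemiring R] {f : α → R}
    {mul : α → α → α} (hf : ∀ a b, f (mul a b) = f a * f b) (s t : Multiset α) :
    ((s.bind fun a => t.map (mul a)).map f).sum = (s.map f).sum * (t.map f).sum := by
  simp only [Multiset.map_bind, Multiset.sum_bind, Multiset.map_map, Function.comp_def, hf,
    Multiset.sum_map_mul_left, Multiset.sum_map_mul_right]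

noncomputable def colMonomial {d : ℕ} (idx : Multiset (Fin 3 × ZMod d)) (c : NNCol d) : ℂ :=
  (idx.map fun pk => c pk.1 pk.2).prod

section

variable {d : ℕ} (idx : Multiset (Fin 3 × ZMod d))

theorem colMonomial_mul (c₁ c₂ : NNCol d) :
    colMonomial idx (fun p k => c₁ p k * c₂ p k) = colMonomial idx c₁ * colMonomial idx c₂ :=
  Multiset.prod_map_mul

theorem sumPot_eq_sum_map_colMonomial (z : NNWeight d) :
    sumPot idx z = (z.map (colMonomial idx)).sum :=
  rfl

theorem sumPot_nnOne : sumPot idx (nnOne d) = 1 := by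
  simp [sumPot, nnOne]

theorem sumPot_nnAdd (z₁ z₂ : NNWeight d) :
    sumPot idx (nnAdd z₁ z₂) = sumPot idx z₁ + sumPot idx z₂ := by
  simp only [sumPot, nnAdd, Multiset.map_add, Multiset.sum_add]

theorem sumPot_nnMul (z₁ z₂ : NNWeight d) :
    sumPot idx (nnMul z₁ z₂) = sumPot idx z₁ * sumPot idx z₂ := by
  simp only [sumPot_eq_sum_map_colMonomial, nnMul]
  exact Multiset.sum_map_bind_map_of_map_mul (colMonomial_mul idx) z₁ z₂

end

/-- Every sum potential is a semi-ring homomorphism from the weight semi-ring to `ℂ`. -/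
theorem sumPot_is_semiring_hom {d : ℕ} (idx : Multiset (Fin 3 × ZMod d)) :
    sumPot idx (nnOne d) = 1 ∧
    (∀ z₁ z₂ : NNWeight d, sumPot idx (nnAdd z₁ z₂) = sumPot idx z₁ + sumPot idx z₂) ∧
    (∀ z₁ z₂ : NNWeight d, sumPot idx (nnMul z₁ z₂) = sumPot idx z₁ * sumPot idx z₂) :=
  ⟨sumPot_nnOne idx, sumPot_nnAdd idx, sumPot_nnMul idx⟩
end

section
/- Let u ∈ Z be an order-1 element with r(u) = 1 for all r in a finite set R₁ of sum potentials, and let R be a finite set of sum potentials such that 1 ∉ Ω_R(u) := {r(u) : r ∈ R}. For each s ∈ Ω_R(u), let ŝ be an order-1 element with r(ŝ) = −s for all r ∈ R ∪ R₁ (e.g., ŝ with all entries equal to −s^{1/3}). Then ρ_R(u) := Π_{s ∈ Ω_R(u)} (u + ŝ) satisfies r(ρ_R(u)) = 0 for all r ∈ R, and r(ρ_R(u)) = Π_{s∈Ω_R(u)}(1 − s) ≠ 0 (the same nonzero constant) for all r ∈ R₁. -/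
/-- Product of a list of weights under ring multiplication, with the order-1
all-ones weight as empty product. -/
noncomputable def nnListProd {d : ℕ} (l : List (NNWeight d)) : NNWeight d :=
  l.foldr nnMul (nnOne d)

/-! Every sum potential `r` is a ring homomorphism, so `r(ρ_R(u)) = ∏_{s ∈ Ω} (r(u) − s)`.
For `r ∈ R` the factor at `s = r(u) ∈ Ω` vanishes; for `r ∈ R₁` every factor is `1 − s`,
which is nonzero because `1 ∉ Ω`. -/

section SumPotential

variable {d : ℕ} (idx : Multiset (Fin 3 × ZMod d))

theorem sumPot_nnListProd (l : List (NNWeight d)) :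
    sumPot idx (nnListProd l) = (l.map (sumPot idx)).prod := by
  induction l with
  | nil => exact sumPot_nnOne idx
  | cons z l ih => simp only [nnListProd, List.foldr_cons, sumPot_nnMul, List.map_cons,
      List.prod_cons, ← ih]

theorem sumPot_nnListProd_toList {ι : Type*} (s : Finset ι) (f : ι → NNWeight d) :
    sumPot idx (nnListProd (s.toList.map f)) = ∏ i ∈ s, sumPot idx (f i) := by
  rw [sumPot_nnListProd, List.map_map, Finset.prod_map_toList]
  rfl

end SumPotential

/-- Construction of partial solutions (polynomial construction). Let `u` be an
order-1 element with `r(u) = 1` for all `r ∈ R₁`, `Ω = {r(u) : r ∈ R}` with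
`1 ∉ Ω`, and for each `s ∈ Ω` let `ŝ` be an order-1 element with `r(ŝ) = −s` for
all `r ∈ R ∪ R₁`. Then `ρ_R(u) = Π_{s ∈ Ω} (u + ŝ)` has `r(ρ_R(u)) = 0` for
every `r ∈ R`, while `r(ρ_R(u)) = Π_{s ∈ Ω} (1 − s) ≠ 0` for every `r ∈ R₁`. -/
theorem partial_solution_polynomial_construction {d : ℕ}
    (R R₁ : Finset (Multiset (Fin 3 × ZMod d)))
    (u : NNCol d) (shat : ℂ → NNCol d)
    (Ω : Finset ℂ) (hΩ : Ω = R.image (fun idx => sumPot idx ({u} : NNWeight d)))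
    (hone : (1 : ℂ) ∉ Ω)
    (hu1 : ∀ idx ∈ R₁, sumPot idx ({u} : NNWeight d) = 1)
    (hshat : ∀ s ∈ Ω, ∀ idx ∈ R ∪ R₁, sumPot idx ({shat s} : NNWeight d) = -s) :
    (∀ idx ∈ R,
      sumPot idx (nnListProd (Ω.toList.map fun s => nnAdd {u} {shat s})) = 0) ∧
    (∀ idx ∈ R₁,
      sumPot idx (nnListProd (Ω.toList.map fun s => nnAdd {u} {shat s})) =
        ∏ s ∈ Ω, (1 - s)) ∧
    (∏ s ∈ Ω, (1 - s)) ≠ 0 := by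
  simp only [sumPot_nnListProd_toList, sumPot_nnAdd]
  refine ⟨fun idx hidx => ?_, fun idx hidx => ?_, ?_⟩
  · have hmem : sumPot idx {u} ∈ Ω := hΩ ▸ Finset.mem_image_of_mem _ hidx
    refine Finset.prod_eq_zero hmem ?_
    rw [hshat _ hmem idx (Finset.mem_union_left _ hidx), add_neg_cancel]
  · refine Finset.prod_congr rfl fun s hs => ?_
    rw [hu1 idx hidx, hshat s hs idx (Finset.mem_union_right _ hidx), sub_eq_add_neg]
  · refine Finset.prod_ne_zero_iff.mpr fun s hs h => hone ?_
    rwa [← sub_eq_zero.mp h] at hs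
end

section
/- Define the order-d² memorization weight z_M for the cyclic group of order d by z_{ak(j₁,j₂)} = d^{−2/3} ω^{kj₁}, z_{bk(j₁,j₂)} = d^{−2/3} ω^{kj₂}, z_{ck(j₁,j₂)} = d^{−2/3} ω^{−k(j₁+j₂)} for k ≠ 0 (and zero for k = 0), where ω = e^{2πi/d} and hidden nodes are indexed by pairs (j₁,j₂) with 0 ≤ j₁,j₂ < d. Then r_{k₁k₂k}(z_M) = 1 if k₁ = k₂ = k ≠ 0 and 0 otherwise, and r_{p,k₁,k₂,k}(z_M) = 0 whenever k₁ + k₂ ≠ 0 mod d or k₁ + k₂ = 0 with the relevant orthogonality, i.e., z_M satisfies the sufficient conditions for a global solution. -/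
open Complex

/-- `e(m) = ω^m` where `ω = e^{2πi/d}` and `m : ZMod d`. -/
noncomputable def chare (d : ℕ) (m : ZMod d) : ℂ :=
  Complex.exp (2 * Real.pi * Complex.I * (m.val : ℂ) / (d : ℂ))

/-- The order-`d²` perfect-memorization weight `z_M`:
`z_{ak(j₁,j₂)} = d^{−2/3} ω^{kj₁}`, `z_{bk(j₁,j₂)} = d^{−2/3} ω^{kj₂}`,
`z_{ck(j₁,j₂)} = d^{−2/3} ω^{−k(j₁+j₂)}` for `k ≠ 0`, and `0` for `k = 0`. -/
noncomputable def zM (d : ℕ) : Fin 3 → ZMod d → Fin d × Fin d → ℂ :=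
  fun p k j =>
    if k = 0 then 0
    else (((d : ℝ) ^ (-(2/3 : ℝ)) : ℝ) : ℂ) *
      (if p = 0 then chare d (k * ((j.1 : ℕ) : ZMod d))
       else if p = 1 then chare d (k * ((j.2 : ℕ) : ZMod d))
       else chare d (-k * (((j.1 : ℕ) : ZMod d) + ((j.2 : ℕ) : ZMod d))))

/-- `r_{k₁k₂k}(z) = Σ_{(j₁,j₂)} z_{ak₁(j₁,j₂)} z_{bk₂(j₁,j₂)} z_{ck(j₁,j₂)}`. -/
noncomputable def r3M {d : ℕ} (k₁ k₂ k : ZMod d) (z : Fin 3 → ZMod d → Fin d × Fin d → ℂ) : ℂ :=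
  ∑ j : Fin d × Fin d, z 0 k₁ j * z 1 k₂ j * z 2 k j

/-- `r_{p,k₁,k₂,k}(z) = Σ_j z_{pk₁j} z_{pk₂j} z_{ckj}` for `p ∈ {a,b}`. -/
noncomputable def rpM {d : ℕ} (p : Fin 3) (k₁ k₂ k : ZMod d) (z : Fin 3 → ZMod d → Fin d × Fin d → ℂ) : ℂ :=
  ∑ j : Fin d × Fin d, z p k₁ j * z p k₂ j * z 2 k j

/-!
For `k ≠ 0` every weight of `z_M` is `d^{-2/3}` times the standard additive character
`ψ = ZMod.stdAddChar` of `ℤ/d`, so each summand of `r` or `r_p` is `d^{-2} ψ(m j₁ + n j₂)`.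
The sum over the hidden pair `(j₁, j₂)` then factors into two character sums
`∑_j ψ(m j) = d · 𝟙(m = 0)`. For `r_{k₁k₂k}` one gets `m = k₁ - k`, `n = k₂ - k`; for
`r_{p,k₁,k₂,k}` one of the two frequencies is `-k ≠ 0`, which kills the sum.
-/

open ZMod Finset

lemma rpow_neg_two_thirds_pow_three {x : ℝ} (hx : 0 ≤ x) :
    (x ^ (-(2 / 3 : ℝ))) ^ 3 = (x ^ 2)⁻¹ := by
  rw [← Real.rpow_natCast, ← Real.rpow_mul hx, ← Real.rpow_two, ← Real.rpow_neg hx]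
  norm_num

lemma zM_zero (d : ℕ) (p : Fin 3) (j : Fin d × Fin d) : zM d p 0 j = 0 :=
  if_pos rfl

section

variable {d : ℕ} [NeZero d]

lemma chare_eq_stdAddChar (m : ZMod d) : chare d m = stdAddChar m := by
  rw [chare, stdAddChar_apply, toCircle_apply]

lemma bijective_natCast_finVal : Function.Bijective (fun j : Fin d ↦ ((j : ℕ) : ZMod d)) := by
  refine (Fintype.bijective_iff_injective_and_card _).2 ⟨fun a b h ↦ Fin.ext ?_, by simp⟩
  simpa [ZMod.val_natCast, Nat.mod_eq_of_lt a.isLt, Nat.mod_eq_of_lt b.isLt]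
    using congrArg ZMod.val h

lemma sum_stdAddChar_mul_natCast_fin (m : ZMod d) :
    ∑ j : Fin d, stdAddChar (m * ((j : ℕ) : ZMod d)) = if m = 0 then (d : ℂ) else 0 := by
  rw [Fintype.sum_bijective _ bijective_natCast_finVal _ (fun x ↦ stdAddChar (x * m))
    (fun j ↦ by rw [mul_comm]), AddChar.sum_mulShift m (isPrimitive_stdAddChar d), ZMod.card]
  split_ifs <;> simp

lemma sum_stdAddChar_fin_pair (m n : ZMod d) :
    ∑ j : Fin d × Fin d, stdAddChar (m * ((j.1 : ℕ) : ZMod d) + n * ((j.2 : ℕ) : ZMod d)) =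
      (if m = 0 then (d : ℂ) else 0) * (if n = 0 then (d : ℂ) else 0) := by
  simp_rw [AddChar.map_add_eq_mul]
  rw [← sum_stdAddChar_mul_natCast_fin m, ← sum_stdAddChar_mul_natCast_fin n,
    Fintype.sum_mul_sum]
  exact Fintype.sum_prod_type _

variable {k₁ k₂ k : ZMod d}

local notation "c" => ((((d : ℝ) ^ (-(2 / 3 : ℝ)) : ℝ) : ℂ))

lemma zM_a_of_ne_zero (hk : k ≠ 0) (j : Fin d × Fin d) :
    zM d 0 k j = c * stdAddChar (k * ((j.1 : ℕ) : ZMod d)) := by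
  simp [zM, hk, chare_eq_stdAddChar]

lemma zM_b_of_ne_zero (hk : k ≠ 0) (j : Fin d × Fin d) :
    zM d 1 k j = c * stdAddChar (k * ((j.2 : ℕ) : ZMod d)) := by
  simp [zM, hk, chare_eq_stdAddChar]

lemma zM_c_of_ne_zero (hk : k ≠ 0) (j : Fin d × Fin d) :
    zM d 2 k j = c * stdAddChar (-k * (((j.1 : ℕ) : ZMod d) + ((j.2 : ℕ) : ZMod d))) := by
  simp [zM, hk, chare_eq_stdAddChar]

lemma zM_a_mul_b_mul_c (hk₁ : k₁ ≠ 0) (hk₂ : k₂ ≠ 0) (hk : k ≠ 0) (j : Fin d × Fin d) :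
    zM d 0 k₁ j * zM d 1 k₂ j * zM d 2 k j =
      c ^ 3 * stdAddChar ((k₁ - k) * ((j.1 : ℕ) : ZMod d) + (k₂ - k) * ((j.2 : ℕ) : ZMod d)) := by
  rw [zM_a_of_ne_zero hk₁, zM_b_of_ne_zero hk₂, zM_c_of_ne_zero hk,
    show (k₁ - k) * ((j.1 : ℕ) : ZMod d) + (k₂ - k) * ((j.2 : ℕ) : ZMod d) =
      k₁ * ((j.1 : ℕ) : ZMod d) + k₂ * ((j.2 : ℕ) : ZMod d) +
        -k * (((j.1 : ℕ) : ZMod d) + ((j.2 : ℕ) : ZMod d)) by ring,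
    AddChar.map_add_eq_mul, AddChar.map_add_eq_mul]
  ring

lemma zM_a_mul_a_mul_c (hk₁ : k₁ ≠ 0) (hk₂ : k₂ ≠ 0) (hk : k ≠ 0) (j : Fin d × Fin d) :
    zM d 0 k₁ j * zM d 0 k₂ j * zM d 2 k j =
      c ^ 3 * stdAddChar ((k₁ + k₂ - k) * ((j.1 : ℕ) : ZMod d) + -k * ((j.2 : ℕ) : ZMod d)) := by
  rw [zM_a_of_ne_zero hk₁, zM_a_of_ne_zero hk₂, zM_c_of_ne_zero hk,
    show (k₁ + k₂ - k) * ((j.1 : ℕ) : ZMod d) + -k * ((j.2 : ℕ) : ZMod d) =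
      k₁ * ((j.1 : ℕ) : ZMod d) + k₂ * ((j.1 : ℕ) : ZMod d) +
        -k * (((j.1 : ℕ) : ZMod d) + ((j.2 : ℕ) : ZMod d)) by ring,
    AddChar.map_add_eq_mul, AddChar.map_add_eq_mul]
  ring

lemma zM_b_mul_b_mul_c (hk₁ : k₁ ≠ 0) (hk₂ : k₂ ≠ 0) (hk : k ≠ 0) (j : Fin d × Fin d) :
    zM d 1 k₁ j * zM d 1 k₂ j * zM d 2 k j =
      c ^ 3 * stdAddChar (-k * ((j.1 : ℕ) : ZMod d) + (k₁ + k₂ - k) * ((j.2 : ℕ) : ZMod d)) := by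
  rw [zM_b_of_ne_zero hk₁, zM_b_of_ne_zero hk₂, zM_c_of_ne_zero hk,
    show -k * ((j.1 : ℕ) : ZMod d) + (k₁ + k₂ - k) * ((j.2 : ℕ) : ZMod d) =
      k₁ * ((j.2 : ℕ) : ZMod d) + k₂ * ((j.2 : ℕ) : ZMod d) +
        -k * (((j.1 : ℕ) : ZMod d) + ((j.2 : ℕ) : ZMod d)) by ring,
    AddChar.map_add_eq_mul, AddChar.map_add_eq_mul]
  ring

lemma ofReal_rpow_neg_two_thirds_pow_three_mul_sq :
    c ^ 3 * ((d : ℂ) * d) = 1 := by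
  have hd : (d : ℂ) ≠ 0 := Nat.cast_ne_zero.2 (NeZero.ne d)
  rw [← Complex.ofReal_pow, rpow_neg_two_thirds_pow_three (Nat.cast_nonneg d)]
  push_cast
  field_simp

lemma r3M_zM_of_ne_zero (hk₁ : k₁ ≠ 0) (hk₂ : k₂ ≠ 0) (hk : k ≠ 0) :
    r3M k₁ k₂ k (zM d) = if k₁ = k ∧ k₂ = k then 1 else 0 := by
  simp_rw [r3M, zM_a_mul_b_mul_c hk₁ hk₂ hk, ← mul_sum, sum_stdAddChar_fin_pair, sub_eq_zero]
  by_cases h₁ : k₁ = k <;> by_cases h₂ : k₂ = k <;>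
    simp [h₁, h₂, ofReal_rpow_neg_two_thirds_pow_three_mul_sq]

lemma rpM_zM_of_ne_zero {p : Fin 3} (hp : p = 0 ∨ p = 1) (hk₁ : k₁ ≠ 0) (hk₂ : k₂ ≠ 0)
    (hk : k ≠ 0) : rpM p k₁ k₂ k (zM d) = 0 := by
  rcases hp with rfl | rfl
  · simp_rw [rpM, zM_a_mul_a_mul_c hk₁ hk₂ hk, ← mul_sum, sum_stdAddChar_fin_pair]
    simp [hk]
  · simp_rw [rpM, zM_b_mul_b_mul_c hk₁ hk₂ hk, ← mul_sum, sum_stdAddChar_fin_pair]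
    simp [hk]

end

/-- The perfect-memorization weight `z_M` satisfies the sufficient conditions for
a global solution: `r_{k₁k₂k}(z_M) = 1` iff `k₁ = k₂ = k ≠ 0` (else `0`), and all
`r_{p,k₁,k₂,k}(z_M)` vanish. -/
theorem zM_global_solution (d : ℕ) (hd : 0 < d) :
    (∀ k₁ k₂ k : ZMod d,
      r3M k₁ k₂ k (zM d) = if k₁ = k ∧ k₂ = k ∧ k ≠ 0 then 1 else 0) ∧
    (∀ p ∈ ({0, 1} : Set (Fin 3)), ∀ k₁ k₂ k : ZMod d,
      rpM p k₁ k₂ k (zM d) = 0) := by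
  have : NeZero d := ⟨hd.ne'⟩
  refine ⟨fun k₁ k₂ k ↦ ?_, fun p hp k₁ k₂ k ↦ ?_⟩
  · by_cases h₀ : k₁ = 0 ∨ k₂ = 0 ∨ k = 0
    · rw [if_neg (by grind)]
      rcases h₀ with h | h | h <;> simp [r3M, h, zM_zero]
    obtain ⟨hk₁, hk₂, hk⟩ : k₁ ≠ 0 ∧ k₂ ≠ 0 ∧ k ≠ 0 := by tauto
    simp [r3M_zM_of_ne_zero hk₁ hk₂ hk, hk]
  · by_cases h₀ : k₁ = 0 ∨ k₂ = 0 ∨ k = 0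
    · rcases h₀ with h | h | h <;> simp [rpM, h, zM_zero]
    obtain ⟨hk₁, hk₂, hk⟩ : k₁ ≠ 0 ∧ k₂ ≠ 0 ∧ k ≠ 0 := by tauto
    exact rpM_zM_of_ne_zero hp hk₁ hk₂ hk
end

section
/- Let (a₀,b₀,c₀), (a₁,b₁,c₁) ∈ ℂ³ be two hidden nodes, all entries nonzero, such that the four constraints a₀b₀c̄₀ + a₁b₁c̄₁ = 0, a₀b̄₀c₀ + a₁b̄₁c₁ = 0, ā₀b₀c₀ + ā₁b₁c₁ = 0 hold (together with their conjugates). Then a₀b₀c₀ + a₁b₁c₁ = 0. Hence every order-2 solution satisfying R_c has r_{kkk} = 0. -/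
/-!
Put `P = a₀b₀c₀` and `Q = a₁b₁c₁`. Taking norms in the first constraint gives `‖P‖ = ‖Q‖`.
Multiplying the constraints by `c₀c₁`, `b₀b₁`, `a₀a₁` puts them in the form `P x = -Q x̄`, and the
product of the three `x`'s is `P̄ Q`; multiplying the three equations therefore gives
`P³ P̄ Q = -Q³ Q̄ P`, i.e. `‖P‖² P Q (P + Q) = 0`.
-/

open ComplexConjugate

theorem cube_mul_conj_add_eq_zero {R : Type*} [CommRing R] [StarRing R]
    {a₀ b₀ c₀ a₁ b₁ c₁ : R}
    (h1 : a₀ * b₀ * conj c₀ + a₁ * b₁ * conj c₁ = 0)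
    (h2 : a₀ * conj b₀ * c₀ + a₁ * conj b₁ * c₁ = 0)
    (h3 : conj a₀ * b₀ * c₀ + conj a₁ * b₁ * c₁ = 0) :
    (a₀ * b₀ * c₀) ^ 3 * conj (a₀ * b₀ * c₀) * (a₁ * b₁ * c₁)
      + (a₁ * b₁ * c₁) ^ 3 * conj (a₁ * b₁ * c₁) * (a₀ * b₀ * c₀) = 0 := by
  set P := a₀ * b₀ * c₀
  set Q := a₁ * b₁ * c₁
  have e1 : P * (conj c₀ * c₁) = -(Q * (c₀ * conj c₁)) := by linear_combination c₀ * c₁ * h1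
  have e2 : P * (conj b₀ * b₁) = -(Q * (b₀ * conj b₁)) := by linear_combination b₀ * b₁ * h2
  have e3 : P * (conj a₀ * a₁) = -(Q * (a₀ * conj a₁)) := by linear_combination a₀ * a₁ * h3
  rw [show conj P = conj a₀ * conj b₀ * conj c₀ by simp only [P, map_mul],
    show conj Q = conj a₁ * conj b₁ * conj c₁ by simp only [Q, map_mul]]
  -- `L₁L₂L₃ - R₁R₂R₃ = (L₁ - R₁)L₂L₃ + R₁(L₂ - R₂)L₃ + R₁R₂(L₃ - R₃)` for `eᵢ : Lᵢ = Rᵢ`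
  linear_combination (P * (conj b₀ * b₁) * (P * (conj a₀ * a₁))) * e1
    - Q * (c₀ * conj c₁) * (P * (conj a₀ * a₁)) * e2
    + Q * (c₀ * conj c₁) * (Q * (b₀ * conj b₁)) * e3

theorem RCLike.add_eq_zero_of_norm_eq_of_cube_mul_conj {𝕜 : Type*} [RCLike 𝕜] {z w : 𝕜}
    (hn : ‖z‖ = ‖w‖) (h : z ^ 3 * conj z * w + w ^ 3 * conj w * z = 0) : z + w = 0 := by
  by_cases hz : z = 0
  · simpa [hz] using hn.symm
  have hw : w ≠ 0 := norm_ne_zero_iff.mp (hn ▸ norm_ne_zero_iff.mpr hz)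
  have hn' : (‖z‖ : 𝕜) = ‖w‖ := congrArg _ hn
  have hfactor : (‖z‖ : 𝕜) ^ 2 * z * w * (z + w) = 0 := by
    linear_combination h - (z ^ 2 * w) * RCLike.conj_mul z - (w ^ 2 * z) * RCLike.conj_mul w
      + z * w ^ 2 * (‖z‖ + ‖w‖ : 𝕜) * hn'
  have hnorm : (‖z‖ : 𝕜) ^ 2 ≠ 0 := by simpa using hz
  simpa [hnorm, hz, hw] using hfactor

theorem order2_rc_forces_rkkk_zero_general (a₀ b₀ c₀ a₁ b₁ c₁ : ℂ)
    (h1 : a₀ * b₀ * conj c₀ + a₁ * b₁ * conj c₁ = 0)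
    (h2 : a₀ * conj b₀ * c₀ + a₁ * conj b₁ * c₁ = 0)
    (h3 : conj a₀ * b₀ * c₀ + conj a₁ * b₁ * c₁ = 0) :
    a₀ * b₀ * c₀ + a₁ * b₁ * c₁ = 0 := by
  have hnorm : ‖a₀ * b₀ * c₀‖ = ‖a₁ * b₁ * c₁‖ := by
    simpa [norm_mul] using congrArg norm (eq_neg_of_add_eq_zero_left h1)
  exact RCLike.add_eq_zero_of_norm_eq_of_cube_mul_conj hnorm (cube_mul_conj_add_eq_zero h1 h2 h3)

/-- Order-2 case of the necessary condition for `R_c`: for two hidden nodes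
`(a₀,b₀,c₀)` and `(a₁,b₁,c₁)` with all entries nonzero, the constraints
`a₀b₀c̄₀ + a₁b₁c̄₁ = 0`, `a₀b̄₀c₀ + a₁b̄₁c₁ = 0`, `ā₀b₀c₀ + ā₁b₁c₁ = 0`
force `a₀b₀c₀ + a₁b₁c₁ = 0`; hence every order-2 solution satisfying `R_c`
has `r_{kkk} = 0`. -/
theorem order2_rc_forces_rkkk_zero (a₀ b₀ c₀ a₁ b₁ c₁ : ℂ)
    (ha₀ : a₀ ≠ 0) (hb₀ : b₀ ≠ 0) (hc₀ : c₀ ≠ 0)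
    (ha₁ : a₁ ≠ 0) (hb₁ : b₁ ≠ 0) (hc₁ : c₁ ≠ 0)
    (h1 : a₀ * b₀ * conj c₀ + a₁ * b₁ * conj c₁ = 0)
    (h2 : a₀ * conj b₀ * c₀ + a₁ * conj b₁ * c₁ = 0)
    (h3 : conj a₀ * b₀ * c₀ + conj a₁ * b₁ * c₁ = 0) :
    a₀ * b₀ * c₀ + a₁ * b₁ * c₁ = 0 :=
  order2_rc_forces_rkkk_zero_general a₀ b₀ c₀ a₁ b₁ c₁ h1 h2 h3
end

section
/- For any complex numbers a_j, b_j, c_j (j ranging over a finite index set) satisfying Σ_j a_j b_j c_j = 1, one has Σ_j (|a_j|² + |b_j|² + |c_j|²) ≥ 3, with equality iff exactly one j has |a_j| = |b_j| = |c_j| = 1 and a_j b_j c_j = 1 while all other triples are zero. -/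
/-!
With `t_j = ‖a_j‖‖b_j‖‖c_j‖` and `s_j = ‖a_j‖² + ‖b_j‖² + ‖c_j‖²`, AM-GM gives
`s_j ≥ 3 t_j^(2/3) ≥ 3 min(t_j, 1)`, while `Σ t_j ≥ ‖Σ a_j b_j c_j‖ = 1` forces
`Σ min(t_j, 1) ≥ 1`; hence `Σ s_j ≥ 3`. If `Σ s_j = 3` then `s_j = 3 min(t_j, 1)` for every `j`,
and the equality case of AM-GM leaves only the norm triples `(0,0,0)` and `(1,1,1)`; two triples
`(1,1,1)` would already contribute `6`, and none at all would make `Σ a_j b_j c_j = 0`.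
-/

open Finset

lemma add_add_pow_three_sub_mul_mul (u v w : ℝ) :
    (u + v + w) ^ 3 - 27 * (u * v * w) =
      (u + v + w) / 2 * ((u - v) ^ 2 + (v - w) ^ 2 + (u - w) ^ 2) +
        3 * (w * (u - v) ^ 2 + u * (v - w) ^ 2 + v * (u - w) ^ 2) := by
  ring

lemma mul_mul_le_add_add_div_three_pow_three {u v w : ℝ} (hu : 0 ≤ u) (hv : 0 ≤ v)
    (hw : 0 ≤ w) : u * v * w ≤ ((u + v + w) / 3) ^ 3 := by
  nlinarith [add_add_pow_three_sub_mul_mul u v w, mul_nonneg hw (sq_nonneg (u - v)),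
    mul_nonneg hu (sq_nonneg (v - w)), mul_nonneg hv (sq_nonneg (u - w)),
    mul_nonneg (add_nonneg (add_nonneg hu hv) hw) (add_nonneg (add_nonneg
      (sq_nonneg (u - v)) (sq_nonneg (v - w))) (sq_nonneg (u - w)))]

lemma mul_mul_sq_le_sum_sq_div_three_pow_three (x y z : ℝ) :
    (x * y * z) ^ 2 ≤ ((x ^ 2 + y ^ 2 + z ^ 2) / 3) ^ 3 := by
  rw [mul_pow, mul_pow]
  exact mul_mul_le_add_add_div_three_pow_three (sq_nonneg x) (sq_nonneg y) (sq_nonneg z)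

-- The cubed AM-GM `t² ≤ (s/3)³` gives `3t ≤ s` when `0 ≤ t ≤ 1` and `3 ≤ s` when `1 ≤ t`.
lemma three_mul_min_le_sum_sq (x y z : ℝ) :
    3 * min (x * y * z) 1 ≤ x ^ 2 + y ^ 2 + z ^ 2 := by
  have amgm := mul_mul_sq_le_sum_sq_div_three_pow_three x y z
  set t := x * y * z
  set s := x ^ 2 + y ^ 2 + z ^ 2
  have hs : 0 ≤ s := by positivity
  rcases le_total t 1 with ht | ht
  · rw [min_eq_left ht]
    rcases le_total t 0 with ht0 | ht0
    · linarith
    have : t ^ 3 ≤ (s / 3) ^ 3 := by nlinarith [pow_le_pow_left₀ ht0 ht 2]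
    linarith [le_of_pow_le_pow_left₀ three_ne_zero (by positivity) this]
  · rw [min_eq_right ht]
    have : 1 ^ 3 ≤ (s / 3) ^ 3 := by nlinarith
    linarith [le_of_pow_le_pow_left₀ three_ne_zero (by positivity) this]

lemma eq_one_of_mul_mul_eq_one_of_add_add_eq_three {u v w : ℝ} (hu : 0 ≤ u) (hv : 0 ≤ v)
    (hw : 0 ≤ w) (h1 : u * v * w = 1) (h3 : u + v + w = 3) :
    u = 1 ∧ v = 1 ∧ w = 1 := by
  have key := add_add_pow_three_sub_mul_mul u v w
  rw [h1, h3] at key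
  have hS : (u - v) ^ 2 + (v - w) ^ 2 + (u - w) ^ 2 ≤ 0 := by
    nlinarith [mul_nonneg hw (sq_nonneg (u - v)), mul_nonneg hu (sq_nonneg (v - w)),
      mul_nonneg hv (sq_nonneg (u - w))]
  have huv : u = v := by nlinarith [sq_nonneg (u - v), sq_nonneg (v - w), sq_nonneg (u - w)]
  have hvw : v = w := by nlinarith [sq_nonneg (u - v), sq_nonneg (v - w), sq_nonneg (u - w)]
  refine ⟨?_, ?_, ?_⟩ <;> linarith

lemma eq_one_of_mul_mul_eq_one_of_sum_sq_eq_three {x y z : ℝ} (hx : 0 ≤ x) (hy : 0 ≤ y)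
    (hz : 0 ≤ z) (hxyz : x * y * z = 1) (hs : x ^ 2 + y ^ 2 + z ^ 2 = 3) :
    x = 1 ∧ y = 1 ∧ z = 1 := by
  obtain ⟨hx1, hy1, hz1⟩ := eq_one_of_mul_mul_eq_one_of_add_add_eq_three (sq_nonneg x)
    (sq_nonneg y) (sq_nonneg z) (by rw [← mul_pow, ← mul_pow, hxyz, one_pow]) hs
  exact ⟨(pow_eq_one_iff_of_nonneg hx two_ne_zero).1 hx1,
    (pow_eq_one_iff_of_nonneg hy two_ne_zero).1 hy1,
    (pow_eq_one_iff_of_nonneg hz two_ne_zero).1 hz1⟩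

lemma sum_sq_eq_three_mul_min_cases {x y z : ℝ} (hx : 0 ≤ x) (hy : 0 ≤ y) (hz : 0 ≤ z)
    (h : x ^ 2 + y ^ 2 + z ^ 2 = 3 * min (x * y * z) 1) :
    (x = 0 ∧ y = 0 ∧ z = 0) ∨ (x = 1 ∧ y = 1 ∧ z = 1) := by
  have amgm := mul_mul_sq_le_sum_sq_div_three_pow_three x y z
  have ht : x * y * z = 0 ∨ x * y * z = 1 := by
    have ht0 : 0 ≤ x * y * z := by positivity
    rcases le_total (x * y * z) 1 with ht1 | ht1
    · rw [min_eq_left ht1] at h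
      rw [h, mul_div_cancel_left₀ _ three_ne_zero] at amgm
      have : (x * y * z) ^ 2 * (1 - x * y * z) = 0 :=
        le_antisymm (by nlinarith) (mul_nonneg (sq_nonneg _) (sub_nonneg.2 ht1))
      rcases mul_eq_zero.1 this with h0 | h1
      · exact Or.inl (pow_eq_zero_iff two_ne_zero |>.1 h0)
      · exact Or.inr (by linarith)
    · rw [min_eq_right ht1] at h
      rw [h] at amgm
      right; nlinarith
  rcases ht with ht | ht
  · rw [ht, min_eq_left zero_le_one, mul_zero] at h
    left
    refine ⟨?_, ?_, ?_⟩ <;> nlinarith [sq_nonneg x, sq_nonneg y, sq_nonneg z]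
  · rw [ht, min_self, mul_one] at h
    exact Or.inr (eq_one_of_mul_mul_eq_one_of_sum_sq_eq_three hx hy hz ht h)

lemma one_le_sum_min_one {ι : Type*} {s : Finset ι} {t : ι → ℝ} (ht : ∀ j ∈ s, 0 ≤ t j)
    (h : 1 ≤ ∑ j ∈ s, t j) : 1 ≤ ∑ j ∈ s, min (t j) 1 := by
  by_cases hbig : ∃ j ∈ s, 1 ≤ t j
  · obtain ⟨j, hj, hj1⟩ := hbig
    calc (1 : ℝ) = min (t j) 1 := (min_eq_right hj1).symm
      _ ≤ ∑ j ∈ s, min (t j) 1 :=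
        single_le_sum (fun i hi => le_min (ht i hi) zero_le_one) hj
  · push Not at hbig
    rwa [sum_congr rfl fun j hj => min_eq_left (hbig j hj).le]

section NormedRing

variable {R ι : Type*} [NormedRing R] [NormOneClass R] [Fintype ι] {a b c : ι → R}

lemma one_le_sum_norm_mul_norm_mul_norm (h : ∑ j, a j * b j * c j = 1) :
    1 ≤ ∑ j, ‖a j‖ * ‖b j‖ * ‖c j‖ :=
  calc (1 : ℝ) = ‖∑ j, a j * b j * c j‖ := by rw [h, norm_one]
    _ ≤ ∑ j, ‖a j * b j * c j‖ := norm_sum_le _ _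
    _ ≤ ∑ j, ‖a j‖ * ‖b j‖ * ‖c j‖ := sum_le_sum fun j _ => norm_mul₃_le

lemma three_le_sum_sq_norm (h : ∑ j, a j * b j * c j = 1) :
    3 ≤ ∑ j, (‖a j‖ ^ 2 + ‖b j‖ ^ 2 + ‖c j‖ ^ 2) :=
  calc (3 : ℝ) ≤ 3 * ∑ j, min (‖a j‖ * ‖b j‖ * ‖c j‖) 1 := by
        linarith [one_le_sum_min_one (fun j _ => by positivity)
          (one_le_sum_norm_mul_norm_mul_norm h)]
    _ = ∑ j, 3 * min (‖a j‖ * ‖b j‖ * ‖c j‖) 1 := mul_sum _ _ _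
    _ ≤ ∑ j, (‖a j‖ ^ 2 + ‖b j‖ ^ 2 + ‖c j‖ ^ 2) :=
        sum_le_sum fun j _ => three_mul_min_le_sum_sq _ _ _

lemma sum_sq_norm_eq_three_mul_min_of_sum_eq_three (h : ∑ j, a j * b j * c j = 1)
    (h3 : ∑ j, (‖a j‖ ^ 2 + ‖b j‖ ^ 2 + ‖c j‖ ^ 2) = 3) (j : ι) :
    ‖a j‖ ^ 2 + ‖b j‖ ^ 2 + ‖c j‖ ^ 2 = 3 * min (‖a j‖ * ‖b j‖ * ‖c j‖) 1 := by
  have hmin := one_le_sum_min_one (fun j _ => by positivity)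
    (one_le_sum_norm_mul_norm_mul_norm h)
  have hsum : ∑ j, 3 * min (‖a j‖ * ‖b j‖ * ‖c j‖) 1 =
      ∑ j, (‖a j‖ ^ 2 + ‖b j‖ ^ 2 + ‖c j‖ ^ 2) :=
    le_antisymm (sum_le_sum fun j _ => three_mul_min_le_sum_sq _ _ _)
      (by rw [← mul_sum]; linarith)
  exact ((sum_eq_sum_iff_of_le fun j _ => three_mul_min_le_sum_sq _ _ _).1 hsum j
    (mem_univ j)).symm

lemma exists_unit_of_sum_sq_norm_eq_three (h : ∑ j, a j * b j * c j = 1)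
    (h3 : ∑ j, (‖a j‖ ^ 2 + ‖b j‖ ^ 2 + ‖c j‖ ^ 2) = 3) :
    ∃ j, ‖a j‖ = 1 ∧ ‖b j‖ = 1 ∧ ‖c j‖ = 1 ∧
      a j * b j * c j = 1 ∧ ∀ i, i ≠ j → a i = 0 ∧ b i = 0 ∧ c i = 0 := by
  have hcases (j : ι) :
      (a j = 0 ∧ b j = 0 ∧ c j = 0) ∨ (‖a j‖ = 1 ∧ ‖b j‖ = 1 ∧ ‖c j‖ = 1) := by
    simpa only [norm_eq_zero] using sum_sq_eq_three_mul_min_cases (norm_nonneg _)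
      (norm_nonneg _) (norm_nonneg _) (sum_sq_norm_eq_three_mul_min_of_sum_eq_three h h3 j)
  obtain ⟨j, hj⟩ : ∃ j, ‖a j‖ = 1 ∧ ‖b j‖ = 1 ∧ ‖c j‖ = 1 := by
    by_contra! hnone
    have hzero : ∑ j, a j * b j * c j = 0 :=
      sum_eq_zero fun j _ => by
        rcases hcases j with ⟨ha, -, -⟩ | ⟨ha, hb, hc⟩
        · rw [ha, zero_mul, zero_mul]
        · exact absurd hc (hnone j ha hb)
    simpa [hzero] using congrArg norm h
  have hrest (i : ι) (hij : i ≠ j) : a i = 0 ∧ b i = 0 ∧ c i = 0 := by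
    refine (hcases i).resolve_right fun ⟨ha, hb, hc⟩ => ?_
    have := add_le_sum (fun k _ => by positivity :
      ∀ k ∈ univ, 0 ≤ ‖a k‖ ^ 2 + ‖b k‖ ^ 2 + ‖c k‖ ^ 2) (mem_univ i) (mem_univ j) hij
    rw [h3, ha, hb, hc, hj.1, hj.2.1, hj.2.2] at this
    norm_num at this
  refine ⟨j, hj.1, hj.2.1, hj.2.2, ?_, hrest⟩
  rw [← h, sum_eq_single_of_mem j (mem_univ j) fun i _ hij => by
    rw [(hrest i hij).1, zero_mul, zero_mul]]

end NormedRing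

/-- Minimal-norm inequality: if `Σ_j a_j b_j c_j = 1` over a finite index set,
then `Σ_j (|a_j|² + |b_j|² + |c_j|²) ≥ 3`, with equality iff exactly one index
`j` has `|a_j| = |b_j| = |c_j| = 1` and `a_j b_j c_j = 1` while all other
triples vanish. -/
theorem min_norm_unit (ι : Type*) [Fintype ι] (a b c : ι → ℂ)
    (h : ∑ j, a j * b j * c j = 1) :
    (3 : ℝ) ≤ ∑ j, (‖a j‖ ^ 2 + ‖b j‖ ^ 2 + ‖c j‖ ^ 2) ∧
    ((∑ j, (‖a j‖ ^ 2 + ‖b j‖ ^ 2 + ‖c j‖ ^ 2) = 3) ↔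
      ∃ j : ι, ‖a j‖ = 1 ∧ ‖b j‖ = 1 ∧ ‖c j‖ = 1 ∧
        a j * b j * c j = 1 ∧ ∀ i : ι, i ≠ j → a i = 0 ∧ b i = 0 ∧ c i = 0) := by
  refine ⟨three_le_sum_sq_norm h, exists_unit_of_sum_sq_norm_eq_three h, ?_⟩
  rintro ⟨j, ha, hb, hc, -, hrest⟩
  rw [sum_eq_single_of_mem j (mem_univ j) fun i _ hij => by simp [hrest i hij], ha, hb, hc]
  norm_num
end
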